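/- arXiv:2407.13281 — 7 statements merged into one kernel-verified Lean document; each statement's English description precedes it below -/
import Mathlib

section
/- Let μ be a non-degenerate probability distribution on ℝ^d and let R be a hyper-rectangle. Then R can be partitioned into two hyper-rectangles R₁, R₂ such that μ(R₁) ≥ μ(R)/4 and μ(R₂) ≥ μ(R)/4. -/
/-!
Choose, for every coordinate `i`, a median `cᵢ` of the `i`-th coordinate under `μ` restricted
to `R`. Non-degeneracy at the point `c` yields a coordinate `i` whose hyperplane `xᵢ = cᵢ` is
`μ`-null. Cutting `R` along it gives the rectangles `R ∩ {xᵢ ≤ cᵢ}` and `R ∩ {xᵢ > cᵢ}`, and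
each of them even carries half of the mass of `R`.
-/

open MeasureTheory
open scoped ENNReal

/-- A hyper-rectangle in `ℝ^d`: a product of half-open intervals `(aᵢ, bᵢ]`. -/
def IsHyperRect {d : ℕ} (S : Set (Fin d → ℝ)) : Prop :=
  ∃ a b : Fin d → ℝ, S = Set.univ.pi fun i => Set.Ioc (a i) (b i)

/-- A measure is non-degenerate if for every point some coordinate hyperplane through it
has measure zero. -/
def NonDegenerate {d : ℕ} (μ : Measure (Fin d → ℝ)) : Prop :=
  ∀ x : Fin d → ℝ, ∃ i : Fin d, μ {x' | x' i = x i} = 0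

open Set Filter Function
open scoped Topology

namespace MeasureTheory

theorem le_measure_Iic_of_forall_gt (ν : Measure ℝ) [IsFiniteMeasure ν] {m : ℝ≥0∞} {c : ℝ}
    (h : ∀ r, c < r → m ≤ ν (Iic r)) : m ≤ ν (Iic c) := by
  have hIic : Iic c = ⋂ r : Ioi c, Iic (r : ℝ) := by
    ext x
    simp only [mem_Iic, mem_iInter, Subtype.forall, mem_Ioi]
    exact ⟨fun hx r hr => hx.trans hr.le, forall_gt_imp_ge_iff_le_of_dense.1⟩
  rw [hIic, Monotone.measure_iInter (s := fun r : Ioi c => Iic (r : ℝ))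
    (fun r s hrs => Iic_subset_Iic.2 hrs) (fun _ => measurableSet_Iic.nullMeasurableSet)
    ⟨⟨c + 1, by simp⟩, measure_ne_top ν _⟩]
  exact le_iInf fun r => h r r.2

theorem measure_Iio_le_of_forall_lt (ν : Measure ℝ) {m : ℝ≥0∞} {c : ℝ}
    (h : ∀ r < c, ν (Iic r) ≤ m) : ν (Iio c) ≤ m := by
  have hIio : Iio c = ⋃ r : Iio c, Iic (r : ℝ) := by
    ext x
    simp only [mem_Iio, mem_iUnion, Subtype.exists, mem_Iic, exists_prop]
    exact ⟨fun hx => ⟨x, hx, le_rfl⟩, fun ⟨r, hr, hxr⟩ => hxr.trans_lt hr⟩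
  rw [hIio, Monotone.measure_iUnion (s := fun r : Iio c => Iic (r : ℝ))
    (fun r s hrs => Iic_subset_Iic.2 hrs)]
  exact iSup_le fun r => h r r.2

theorem bddBelow_setOf_le_measure_Iic (ν : Measure ℝ) [IsFiniteMeasure ν] {m : ℝ≥0∞}
    (hm : m ≠ 0) : BddBelow {t | m ≤ ν (Iic t)} := by
  have hbot : Tendsto (fun t => ν (Iic t)) atBot (𝓝 0) := by
    have := tendsto_measure_iInter_atBot (fun t => measurableSet_Iic.nullMeasurableSet)
      (monotone_Iic (α := ℝ)) ⟨0, measure_ne_top ν _⟩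
    rwa [iInter_Iic_eq_empty_iff.2 (by simp), measure_empty] at this
  obtain ⟨t₀, ht₀⟩ := eventually_atBot.1 (hbot.eventually_lt_const (pos_iff_ne_zero.2 hm))
  exact ⟨t₀, fun t ht => not_lt.1 fun htt₀ => (ht₀ t htt₀.le).not_ge ht⟩

theorem exists_half_le_measure_Iic_and_Ici (ν : Measure ℝ) [IsFiniteMeasure ν] :
    ∃ c, ν univ / 2 ≤ ν (Iic c) ∧ ν univ / 2 ≤ ν (Ici c) := by
  rcases eq_or_ne (ν univ) 0 with h0 | h0
  · exact ⟨0, by simp [h0]⟩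
  set S := {t | ν univ / 2 ≤ ν (Iic t)}
  have hS : S.Nonempty :=
    ((tendsto_measure_Iic_atTop ν).eventually_const_le
      (ENNReal.half_lt_self h0 (measure_ne_top ν univ))).exists
  have hSbdd : BddBelow S :=
    bddBelow_setOf_le_measure_Iic ν (ENNReal.half_pos h0).ne'
  refine ⟨sInf S, le_measure_Iic_of_forall_gt ν fun r hr => ?_, ?_⟩
  · obtain ⟨t, htS, htr⟩ := exists_lt_of_csInf_lt hS hr
    exact htS.trans (measure_mono (Iic_subset_Iic.2 htr.le))
  · have hlow : ν (Iio (sInf S)) ≤ ν univ / 2 := measure_Iio_le_of_forall_lt ν fun r hr =>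
      (not_le.1 (show r ∉ S from notMem_of_lt_csInf hr hSbdd)).le
    calc ν univ / 2 = ν univ - ν univ / 2 := (ENNReal.sub_half (measure_ne_top ν _)).symm
      _ ≤ ν univ - ν (Iio (sInf S)) := tsub_le_tsub_left hlow _
      _ = ν (Ici (sInf S)) := by
        rw [← compl_Iio, measure_compl measurableSet_Iio (measure_ne_top ν _)]

theorem exists_half_le_measure_inter_le_and_ge {α : Type*} [MeasurableSpace α]
    (μ : Measure α) [IsFiniteMeasure μ] {f : α → ℝ} (hf : Measurable f) (s : Set α) :
    ∃ c, μ s / 2 ≤ μ (s ∩ {x | f x ≤ c}) ∧ μ s / 2 ≤ μ (s ∩ {x | c ≤ f x}) := by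
  obtain ⟨c, hle, hge⟩ := exists_half_le_measure_Iic_and_Ici ((μ.restrict s).map f)
  rw [Measure.map_apply hf MeasurableSet.univ, preimage_univ, Measure.restrict_apply_univ]
    at hle hge
  rw [Measure.map_apply hf measurableSet_Iic, Measure.restrict_apply (hf measurableSet_Iic),
    inter_comm] at hle
  rw [Measure.map_apply hf measurableSet_Ici, Measure.restrict_apply (hf measurableSet_Ici),
    inter_comm] at hge
  exact ⟨c, hle, hge⟩

theorem measure_inter_ge_le_measure_inter_gt_of_null {α : Type*} [MeasurableSpace α]
    {μ : Measure α} {f : α → ℝ} {c : ℝ} (hc : μ {x | f x = c} = 0) (s : Set α) :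
    μ (s ∩ {x | c ≤ f x}) ≤ μ (s ∩ {x | c < f x}) :=
  measure_mono_ae <| (measure_eq_zero_iff_ae_notMem.1 hc).mono fun _ hx ⟨hs, hle⟩ =>
    ⟨hs, lt_of_le_of_ne hle fun h => hx h.symm⟩

end MeasureTheory

theorem Set.univ_pi_inter_preimage_eval {ι : Type*} {α : ι → Type*} [DecidableEq ι]
    (t : ∀ i, Set (α i)) (i : ι) (s : Set (α i)) :
    pi univ t ∩ eval i ⁻¹' s = pi univ (update t i (t i ∩ s)) := by
  rw [← univ_pi_update_univ, ← pi_inter_distrib]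
  congr 1
  ext1 j
  rcases eq_or_ne j i with rfl | hj <;> simp [*]

namespace IsHyperRect

variable {d : ℕ} {R : Set (Fin d → ℝ)}

theorem inter_setOf_apply_le (hR : IsHyperRect R) (i : Fin d) (c : ℝ) :
    IsHyperRect (R ∩ {x | x i ≤ c}) := by
  obtain ⟨a, b, rfl⟩ := hR
  refine ⟨a, update b i (min (b i) c), ?_⟩
  rw [show {x : Fin d → ℝ | x i ≤ c} = eval i ⁻¹' Iic c from rfl,
    univ_pi_inter_preimage_eval, Ioc_inter_Iic]
  congr 1
  ext1 j
  rcases eq_or_ne j i with rfl | hj <;> simp [*]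

theorem inter_setOf_lt_apply (hR : IsHyperRect R) (i : Fin d) (c : ℝ) :
    IsHyperRect (R ∩ {x | c < x i}) := by
  obtain ⟨a, b, rfl⟩ := hR
  refine ⟨update a i (max (a i) c), b, ?_⟩
  rw [show {x : Fin d → ℝ | c < x i} = eval i ⁻¹' Ioi c from rfl,
    univ_pi_inter_preimage_eval, Ioc_inter_Ioi]
  congr 1
  ext1 j
  rcases eq_or_ne j i with rfl | hj <;> simp [*]

end IsHyperRect

/-- Any hyper-rectangle can be partitioned into two hyper-rectangles, each carrying at
least a quarter of its mass. -/
theorem hyperrect_partition_into_two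
    (d : ℕ) (μ : Measure (Fin d → ℝ)) [IsProbabilityMeasure μ] (hμ : NonDegenerate μ)
    (R : Set (Fin d → ℝ)) (hR : IsHyperRect R) :
    ∃ R₁ R₂ : Set (Fin d → ℝ),
      IsHyperRect R₁ ∧ IsHyperRect R₂ ∧ R₁ ∪ R₂ = R ∧ Disjoint R₁ R₂ ∧
      μ R / 4 ≤ μ R₁ ∧ μ R / 4 ≤ μ R₂ := by
  choose c hc using fun i : Fin d =>
    exists_half_le_measure_inter_le_and_ge μ (measurable_pi_apply i) R
  obtain ⟨i, hi⟩ := hμ c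
  obtain ⟨hlow, hupp⟩ := hc i
  have hquarter : μ R / 4 ≤ μ R / 2 := ENNReal.div_le_div_left (by norm_num) _
  refine ⟨R ∩ {x | x i ≤ c i}, R ∩ {x | c i < x i}, hR.inter_setOf_apply_le i (c i),
    hR.inter_setOf_lt_apply i (c i), ?_, ?_, hquarter.trans hlow,
    hquarter.trans (hupp.trans (measure_inter_ge_le_measure_inter_gt_of_null hi R))⟩
  · ext x
    simp [← and_or_left, le_or_gt]
  · exact Disjoint.mono inter_subset_right inter_subset_right
      (disjoint_left.2 fun ⦃x⦄ (h₁ : x i ≤ c i) (h₂ : c i < x i) => h₁.not_gt h₂)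
end

section
/- For all 0 < γ, ε₁, ε₂ < 1/48, there exist an integer m > 0 and real numbers 0 ≤ p₁, p₂, …, p_{2m}, q₁, …, q_{2m} ≤ 1 such that the following four conditions hold: (1) for all 0 ≤ t ≤ 2m−1, Σ_{i=1}^{2m} p_i^t = Σ_{i=1}^{2m} q_i^t; (2) p₁ ≤ p₂ ≤ … ≤ p_m < γ(1−2ε₁) < γ(1+2ε₁) < p_{m+1} ≤ … ≤ p_{2m}; (3) q₁ ≤ q₂ ≤ … ≤ q_{m−1} < q_m = q_{m+1} = γ(1+2ε₁) < q_{m+2} ≤ … ≤ q_{2m}; and (4) 1/(4ε₂) ≥ m ≥ 1/(8·max(2ε₁, ε₂)) + 1. -/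
/-!
Put `a = γ(1 + 2ε₁)` and take the Chebyshev–Lobatto nodes `y_j = a (1 - cos (π j / 2m))`,
`0 ≤ j ≤ 2m`, which increase from `0` to `2a`. Let `p` list the odd nodes `y₁, y₁, y₃, y₃, …` and
`q` the even ones `y₀, y₂, y₂, …, y_{2m-2}, y_{2m-2}, y_{2m}`. By the symmetry `j ↦ 4m - j`,
`∑ qᵢᵗ - ∑ pᵢᵗ = ∑_{j < 4m} (-1)ʲ yⱼᵗ`; writing `cos` through `ω = exp (π i / 2m)`,
this is a combination of sums of non-trivial `4m`-th roots of unity as long as `t < 2m`, hence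
vanishes. For even `m` the middle node `y_m = a` occurs twice in `q`, and by Jordan's inequality
`y_{m-1} = a (1 - sin (π / 2m)) ≤ a (1 - 1/m)`, which lies below `γ(1 - 2ε₁)` once `4ε₁m ≤ 1`.
-/

open Finset Real Polynomial

theorem IsPrimitiveRoot.sum_neg_one_pow_mul_add_inv_pow {K : Type*} [Field K] {ω : K} {n t : ℕ}
    (hω : IsPrimitiveRoot ω (2 * n)) (ht : t < n) :
    ∑ j ∈ range (2 * n), (-1) ^ j * (ω ^ j + (ω ^ j)⁻¹) ^ t = 0 := by
  have hneg : ω ^ n = -1 := by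
    have h := hω.pow_of_dvd (p := n) (by omega) (dvd_mul_left n 2)
    rw [Nat.mul_div_cancel _ (by omega)] at h
    exact h.eq_neg_one_of_two_right
  have hω0 : ω ≠ 0 := hω.ne_zero (by omega)
  -- With `-1 = ω ^ n`, the binomial expansion turns the sum into geometric sums of the
  -- `2n`-th roots of unity `ω ^ (s + n - (t - s))`, none of which is `1` since `t < n`.
  have hgeom : ∀ s ≤ t, ∑ j ∈ range (2 * n), (ω ^ (s + n) * ω⁻¹ ^ (t - s)) ^ j = 0 := by
    intro s hs
    have hz : ω ^ (s + n) * ω⁻¹ ^ (t - s) ≠ 1 := by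
      intro h
      rw [inv_pow, mul_inv_eq_one₀ (pow_ne_zero _ hω0)] at h
      have := hω.pow_inj (by omega) (by omega) h
      omega
    have hpow (a : ℕ) : (ω ^ a) ^ (2 * n) = 1 := by
      rw [← pow_mul, mul_comm, pow_mul, hω.pow_eq_one, one_pow]
    rw [geom_sum_eq hz, mul_pow, inv_pow, inv_pow, hpow, hpow, inv_one, one_mul, sub_self,
      zero_div]
  calc ∑ j ∈ range (2 * n), (-1) ^ j * (ω ^ j + (ω ^ j)⁻¹) ^ t
      = ∑ j ∈ range (2 * n), ∑ s ∈ range (t + 1),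
          (t.choose s : K) * (ω ^ (s + n) * ω⁻¹ ^ (t - s)) ^ j := by
        refine sum_congr rfl fun j _ => ?_
        rw [add_pow, mul_sum]
        refine sum_congr rfl fun s _ => ?_
        rw [← hneg]
        ring
    _ = 0 := by
        rw [sum_comm]
        exact sum_eq_zero fun s hs => by
          rw [← mul_sum, hgeom s (Nat.lt_succ_iff.mp (mem_range.mp hs)), mul_zero]

theorem sum_range_neg_one_pow_mul_cos_pow {n t : ℕ} (ht : t < n) :
    ∑ j ∈ range (2 * n), (-1) ^ j * cos (π * j / n) ^ t = 0 := by
  have hroot :=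
    (Complex.isPrimitiveRoot_exp (2 * n) (by omega)).sum_neg_one_pow_mul_add_inv_pow ht
  have hterm (j : ℕ) : Complex.exp (2 * π * Complex.I / (2 * n : ℕ)) ^ j
      + (Complex.exp (2 * π * Complex.I / (2 * n : ℕ)) ^ j)⁻¹
        = ((2 * cos (π * j / n) : ℝ) : ℂ) := by
    rw [← Complex.exp_nat_mul, ← Complex.exp_neg]
    push_cast
    rw [Complex.two_cos]
    congr 2 <;> field_simp
  simp only [hterm] at hroot
  have hreal : ∑ j ∈ range (2 * n), (-1) ^ j * (2 * cos (π * j / n)) ^ t = 0 := by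
    exact_mod_cast hroot
  simp only [mul_pow, mul_left_comm _ ((2 : ℝ) ^ t), ← mul_sum] at hreal
  exact (mul_eq_zero.mp hreal).resolve_left (by positivity)

theorem Polynomial.sum_range_neg_one_pow_mul_eval_cos {P : ℝ[X]} {n : ℕ} (hP : P.natDegree < n) :
    ∑ j ∈ range (2 * n), (-1) ^ j * P.eval (cos (π * j / n)) = 0 := by
  simp only [eval_eq_sum_range' hP, mul_sum]
  rw [sum_comm]
  refine sum_eq_zero fun r hr => ?_
  simp only [mul_left_comm _ (P.coeff r), ← mul_sum,
    sum_range_neg_one_pow_mul_cos_pow (mem_range.mp hr), mul_zero]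

theorem sum_range_two_mul_neg_one_pow_mul_of_symm {R : Type*} [CommRing R] (g : ℕ → R) (n : ℕ)
    (hg : ∀ j ≤ 2 * n, g (2 * n - j) = g j) :
    ∑ j ∈ range (2 * n), (-1) ^ j * g j = ∑ j ∈ range n, (-1) ^ j * (g j - g (j + 1)) := by
  rw [two_mul, sum_range_add, ← sum_range_reflect (fun j => (-1) ^ (n + j) * g (n + j)) n]
  have hsecond : ∀ j ∈ range n, (-1) ^ (n + (n - 1 - j)) * g (n + (n - 1 - j))
      = -((-1) ^ j * g (j + 1)) := by
    intro j hj
    have hj := mem_range.mp hj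
    rw [show n + (n - 1 - j) = 2 * n - (j + 1) by omega, hg _ (by omega),
      show 2 * n - (j + 1) = j + 1 + 2 * (n - 1 - j) by omega, pow_add, pow_add, pow_mul]
    simp
  rw [sum_congr rfl hsecond, sum_neg_distrib, ← sub_eq_add_neg, ← sum_sub_distrib]
  simp only [mul_sub]

theorem sum_Icc_sub_interlace {R : Type*} [CommRing R] (g : ℕ → R) (n : ℕ) :
    ∑ i ∈ Icc 1 n, (g (2 * ((i + 1) / 2) - 1) - g (2 * (i / 2)))
      = -∑ j ∈ range n, (-1) ^ j * (g j - g (j + 1)) := by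
  rw [← Ico_add_one_right_eq_Icc, sum_Ico_eq_sum_range, add_tsub_cancel_right, ← sum_neg_distrib]
  refine sum_congr rfl fun j _ => ?_
  obtain ⟨k, rfl | rfl⟩ := Nat.even_or_odd' j
  · rw [show 2 * ((1 + 2 * k + 1) / 2) - 1 = 2 * k + 1 by omega,
      show 2 * ((1 + 2 * k) / 2) = 2 * k by omega, pow_mul]
    simp
  · rw [show 2 * ((1 + (2 * k + 1) + 1) / 2) - 1 = 2 * k + 1 by omega,
      show 2 * ((1 + (2 * k + 1)) / 2) = 2 * k + 1 + 1 by omega, pow_succ, pow_mul]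
    simp

theorem Polynomial.sum_Icc_eval_cos_odd_eq_even {P : ℝ[X]} {n : ℕ} (hP : P.natDegree < n) :
    ∑ i ∈ Icc 1 n, P.eval (cos (π * (2 * ((i + 1) / 2) - 1 : ℕ) / n))
      = ∑ i ∈ Icc 1 n, P.eval (cos (π * (2 * (i / 2) : ℕ) / n)) := by
  set g : ℕ → ℝ := fun j => P.eval (cos (π * j / n))
  have hsymm : ∀ j ≤ 2 * n, g (2 * n - j) = g j := by
    intro j hj
    have hn : (n : ℝ) ≠ 0 := by norm_cast; omega
    simp only [g]
    rw [Nat.cast_sub hj, show π * ((2 * n : ℕ) - j : ℝ) / n = 2 * π - π * j / n by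
      push_cast; field_simp, cos_two_pi_sub]
  rw [← sub_eq_zero, ← sum_sub_distrib]
  change ∑ i ∈ Icc 1 n, (g (2 * ((i + 1) / 2) - 1) - g (2 * (i / 2))) = 0
  rw [sum_Icc_sub_interlace, ← sum_range_two_mul_neg_one_pow_mul_of_symm g n hsymm,
    P.sum_range_neg_one_pow_mul_eval_cos hP, neg_zero]

noncomputable def lobattoNode (a : ℝ) (n j : ℕ) : ℝ := a * (1 - cos (π * j / n))

theorem sum_Icc_lobattoNode_odd_pow_eq_even (a : ℝ) {n t : ℕ} (ht : t < n) :
    ∑ i ∈ Icc 1 n, lobattoNode a n (2 * ((i + 1) / 2) - 1) ^ t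
      = ∑ i ∈ Icc 1 n, lobattoNode a n (2 * (i / 2)) ^ t := by
  have hdeg : ((C a * (1 - X)) ^ t).natDegree < n :=
    (natDegree_pow_le_of_le t (by compute_degree! : (C a * (1 - X)).natDegree ≤ 1)).trans_lt
      (by simpa using ht)
  simpa [lobattoNode] using sum_Icc_eval_cos_odd_eq_even hdeg

theorem lobattoNode_nonneg {a : ℝ} (ha : 0 ≤ a) (n j : ℕ) : 0 ≤ lobattoNode a n j :=
  mul_nonneg ha (sub_nonneg.mpr (cos_le_one _))

theorem lobattoNode_le {a : ℝ} (ha : 0 ≤ a) (n j : ℕ) : lobattoNode a n j ≤ 2 * a := by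
  unfold lobattoNode
  nlinarith [neg_one_le_cos (π * j / n)]

theorem lobattoNode_strictMonoOn {a : ℝ} (ha : 0 < a) (n : ℕ) :
    StrictMonoOn (lobattoNode a n) (Set.Iic n) := by
  intro i hi j hj hij
  have hn : (0 : ℝ) < n := by
    have : 0 < n := lt_of_lt_of_le (Nat.zero_lt_of_lt hij) hj
    exact_mod_cast this
  have hmem {k : ℕ} (hk : k ≤ n) : π * k / n ∈ Set.Icc 0 π := by
    refine ⟨by positivity, (div_le_iff₀ hn).mpr ?_⟩
    exact mul_le_mul_of_nonneg_left (by exact_mod_cast hk) pi_pos.le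
  have hcos : cos (π * j / n) < cos (π * i / n) :=
    strictAntiOn_cos (hmem hi) (hmem hj) (by gcongr)
  unfold lobattoNode
  nlinarith

theorem lobattoNode_two_mul_self (a : ℝ) {m : ℕ} (hm : m ≠ 0) : lobattoNode a (2 * m) m = a := by
  have : π * m / (2 * m : ℕ) = π / 2 := by push_cast; field_simp
  rw [lobattoNode, this, cos_pi_div_two, sub_zero, mul_one]

theorem lobattoNode_two_mul_self_sub_one (a : ℝ) {m : ℕ} (hm : 1 ≤ m) :
    lobattoNode a (2 * m) (m - 1) = a * (1 - sin (π / (2 * m))) := by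
  have : π * (m - 1 : ℕ) / (2 * m : ℕ) = π / 2 - π / (2 * m) := by
    push_cast [Nat.cast_sub hm]; field_simp
  rw [lobattoNode, this, cos_pi_div_two_sub]

theorem inv_le_sin_pi_div_two_mul {m : ℕ} (hm : 1 ≤ m) : (m : ℝ)⁻¹ ≤ sin (π / (2 * m)) := by
  have hm' : (1 : ℝ) ≤ m := by exact_mod_cast hm
  have hle : π / (2 * m) ≤ π / 2 := div_le_div_of_nonneg_left pi_pos.le two_pos (by linarith)
  calc (m : ℝ)⁻¹ = 2 / π * (π / (2 * m)) := by field_simp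
    _ ≤ sin (π / (2 * m)) := mul_le_sin (by positivity) hle

theorem lobattoNode_two_mul_self_sub_one_lt {γ ε : ℝ} (hγ : 0 < γ) (hε : 0 < ε) {m : ℕ}
    (hm : 1 ≤ m) (hεm : 4 * ε * m ≤ 1) :
    lobattoNode (γ * (1 + 2 * ε)) (2 * m) (m - 1) < γ * (1 - 2 * ε) := by
  have hsin : 4 * ε ≤ sin (π / (2 * m)) := by
    refine le_trans ?_ (inv_le_sin_pi_div_two_mul hm)
    rwa [← one_div, le_div_iff₀ (by positivity)]
  calc lobattoNode (γ * (1 + 2 * ε)) (2 * m) (m - 1)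
      = γ * (1 + 2 * ε) * (1 - sin (π / (2 * m))) := lobattoNode_two_mul_self_sub_one _ hm
    _ ≤ γ * (1 + 2 * ε) * (1 - 4 * ε) := by gcongr
    _ < γ * (1 - 2 * ε) := by nlinarith [mul_pos hγ (mul_pos hε hε)]

theorem exists_even_nat_mem_Ico {u : ℝ} (hu : 0 ≤ u) :
    ∃ m : ℕ, Even m ∧ u ≤ m ∧ (m : ℝ) < u + 2 := by
  refine ⟨2 * ⌈u / 2⌉₊, even_two_mul _, ?_, ?_⟩ <;> push_cast
  · linarith [Nat.le_ceil (u / 2)]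
  · linarith [Nat.ceil_lt_add_one (by positivity : 0 ≤ u / 2)]

theorem exists_even_nat_one_div_add_one_le_mul_lt_one {M : ℝ} (hM₀ : 0 < M) (hM : M < 1 / 24) :
    ∃ m : ℕ, Even m ∧ 1 / (8 * M) + 1 ≤ m ∧ 4 * M * m < 1 := by
  obtain ⟨m, hm, hlow, hup⟩ := exists_even_nat_mem_Ico (u := 1 / (8 * M) + 1) (by positivity)
  refine ⟨m, hm, hlow, ?_⟩
  calc 4 * M * m < 4 * M * (1 / (8 * M) + 3) := by gcongr; linarith
    _ = 1 / 2 + 12 * M := by field_simp; ring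
    _ < 1 := by linarith

/-- Existence of the two interleaved root families `p₁,…,p_{2m}` and `q₁,…,q_{2m}` with
matching power sums (Lemma `get_the_roots`). Indices run over `1 ≤ i ≤ 2m`. -/
theorem get_the_roots
    (γ ε₁ ε₂ : ℝ)
    (hγ : 0 < γ) (hγ' : γ < 1 / 48)
    (hε₁ : 0 < ε₁) (hε₁' : ε₁ < 1 / 48)
    (hε₂ : 0 < ε₂) (hε₂' : ε₂ < 1 / 48) :
    ∃ (m : ℕ) (p q : ℕ → ℝ), 0 < m ∧
      -- the numbers all lie in [0, 1]
      (∀ i, 1 ≤ i → i ≤ 2 * m → 0 ≤ p i ∧ p i ≤ 1 ∧ 0 ≤ q i ∧ q i ≤ 1) ∧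
      -- (1) matching power sums for all 0 ≤ t ≤ 2m − 1
      (∀ t : ℕ, t ≤ 2 * m - 1 →
        ∑ i ∈ Finset.Icc 1 (2 * m), p i ^ t = ∑ i ∈ Finset.Icc 1 (2 * m), q i ^ t) ∧
      -- (2) p₁ ≤ … ≤ p_m < γ(1−2ε₁) < γ(1+2ε₁) < p_{m+1} ≤ … ≤ p_{2m}
      (∀ i j, 1 ≤ i → i ≤ j → j ≤ 2 * m → p i ≤ p j) ∧
      p m < γ * (1 - 2 * ε₁) ∧ γ * (1 + 2 * ε₁) < p (m + 1) ∧
      -- (3) q₁ ≤ … ≤ q_{m−1} < q_m = q_{m+1} = γ(1+2ε₁) < q_{m+2} ≤ … ≤ q_{2m}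
      (∀ i j, 1 ≤ i → i ≤ j → j ≤ 2 * m → q i ≤ q j) ∧
      q (m - 1) < γ * (1 + 2 * ε₁) ∧
      q m = γ * (1 + 2 * ε₁) ∧ q (m + 1) = γ * (1 + 2 * ε₁) ∧
      γ * (1 + 2 * ε₁) < q (m + 2) ∧
      -- (4) 1/(4ε₂) ≥ m ≥ 1/(8 max(2ε₁, ε₂)) + 1
      (m : ℝ) ≤ 1 / (4 * ε₂) ∧ 1 / (8 * max (2 * ε₁) ε₂) + 1 ≤ (m : ℝ) := by
  set M := max (2 * ε₁) ε₂
  have hM₀ : 0 < M := hε₂.trans_le (le_max_right _ _)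
  have hM : M < 1 / 24 := max_lt (by linarith) (by linarith)
  obtain ⟨m, ⟨k, hmk⟩, hlow, hMm⟩ := exists_even_nat_one_div_add_one_le_mul_lt_one hM₀ hM
  have hm : 1 ≤ m := by
    have : (1 : ℝ) ≤ m := by linarith [one_div_pos.mpr (by positivity : 0 < 8 * M)]
    exact_mod_cast this
  set a := γ * (1 + 2 * ε₁)
  have ha : 0 < a := by positivity
  have h2a : 2 * a ≤ 1 := by nlinarith
  set y := lobattoNode a (2 * m)
  have hym : y m = a := lobattoNode_two_mul_self a (by omega)
  have hy := lobattoNode_strictMonoOn ha (2 * m)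
  have hlt {i j : ℕ} (hij : i < j) (hj : j ≤ 2 * m) : y i < y j :=
    hy (Set.mem_Iic.mpr (by omega)) (Set.mem_Iic.mpr hj) hij
  have hle {i j : ℕ} (hij : i ≤ j) (hj : j ≤ 2 * m) : y i ≤ y j :=
    hy.monotoneOn (Set.mem_Iic.mpr (by omega)) (Set.mem_Iic.mpr hj) hij
  have hy01 (j : ℕ) : 0 ≤ y j ∧ y j ≤ 1 :=
    ⟨lobattoNode_nonneg ha.le _ _, (lobattoNode_le ha.le _ _).trans h2a⟩
  refine ⟨m, fun i => y (2 * ((i + 1) / 2) - 1), fun i => y (2 * (i / 2)), hm,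
    fun i _ _ => ⟨(hy01 _).1, (hy01 _).2, (hy01 _).1, (hy01 _).2⟩,
    fun t ht => sum_Icc_lobattoNode_odd_pow_eq_even a (by omega),
    fun i j _ hij hj => hle (by omega) (by omega), ?_,
    hym ▸ hlt (by omega) (by omega),
    fun i j _ hij hj => hle (by omega) (by omega),
    hym ▸ hlt (by omega) (by omega),
    hym ▸ congrArg y (by omega), hym ▸ congrArg y (by omega),
    hym ▸ hlt (by omega) (by omega), ?_, hlow⟩
  · show y (2 * ((m + 1) / 2) - 1) < γ * (1 - 2 * ε₁)
    rw [show 2 * ((m + 1) / 2) - 1 = m - 1 by omega]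
    exact lobattoNode_two_mul_self_sub_one_lt hγ hε₁ hm (by nlinarith [le_max_left (2 * ε₁) ε₂])
  · rw [le_div_iff₀ (by positivity)]
    nlinarith [le_max_right (2 * ε₁) ε₂]
end

section
/- Let μ be a probability measure on ℝ^d, let 0 < ε₁, ε₂ < 1/48 and set ε = max(ε₁, ε₂), let 0 < λ < 1, and let m be an integer with m ≥ 1/(16ε). Let R₁, …, R_L be pairwise disjoint measurable sets with μ(R_i) ≤ 4λ for each i and with L ≤ 1/λ. If n ≤ 1/(2592·ε·λ^{1−8ε}), then the probability over X = (x₁,…,xₙ) ~ μⁿ that there exists some 1 ≤ i ≤ L with at least 2m of the points x₁,…,xₙ lying in R_i is at most 1/180. -/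
open MeasureTheory
open scoped ENNReal Classical

lemma pow_self_le_four_pow_mul_factorial (k : ℕ) :
    (k : ℝ) ^ k ≤ 4 ^ k * (k.factorial : ℝ) := by
  induction k with
  | zero => simp
  | succ k ih =>
    have key : ((k : ℝ) + 1) ^ k ≤ 4 * (k : ℝ) ^ k := by
      rcases Nat.eq_zero_or_pos k with h | h
      · subst h; norm_num
      · have hk : (0:ℝ) < k := by exact_mod_cast h
        have h1 : (k:ℝ) + 1 = k * (1 + 1/k) := by field_simp
        rw [h1, mul_pow]
        have h2 : (1 + 1/(k:ℝ)) ^ k ≤ Real.exp (1/k) ^ k := by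
          apply pow_le_pow_left₀ (by positivity)
          have := Real.add_one_le_exp (1/(k:ℝ))
          linarith
        have h3 : Real.exp (1/(k:ℝ)) ^ k = Real.exp 1 := by
          rw [← Real.exp_nat_mul]
          congr 1
          field_simp
        have h4 : Real.exp 1 ≤ 4 := by
          have := Real.exp_one_lt_d9
          linarith
        calc (k:ℝ)^k * (1 + 1/(k:ℝ))^k ≤ (k:ℝ)^k * Real.exp 1 := by
              rw [← h3]; exact mul_le_mul_of_nonneg_left h2 (by positivity)
          _ ≤ 4 * (k:ℝ)^k := by nlinarith [pow_nonneg hk.le k]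
    have hfac : ((k+1).factorial : ℝ) = ((k:ℝ)+1) * k.factorial := by
      rw [Nat.factorial_succ]; push_cast; ring
    have hkn : (0:ℝ) ≤ (k:ℝ) + 1 := by positivity
    calc ((k+1:ℕ):ℝ) ^ (k+1) = ((k:ℝ)+1) * ((k:ℝ)+1)^k := by push_cast; ring
      _ ≤ ((k:ℝ)+1) * (4 * (k:ℝ)^k) := mul_le_mul_of_nonneg_left key hkn
      _ ≤ ((k:ℝ)+1) * (4 * (4^k * k.factorial)) := by
          apply mul_le_mul_of_nonneg_left _ hkn
          apply mul_le_mul_of_nonneg_left ih (by norm_num)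
      _ = 4 ^ (k+1) * ((k+1).factorial : ℝ) := by rw [hfac]; ring


lemma real_count_bound (ε lam : ℝ) (hε : 0 < ε) (hlam : 0 < lam) (hlam' : lam < 1)
    (L n k : ℕ) (hL : (L:ℝ) ≤ 1/lam) (hk : 1/(8*ε) ≤ (k:ℝ))
    (hn : (n:ℝ) ≤ 1 / (2592 * ε * lam ^ (1 - 8*ε))) (hk2 : 2 ≤ k) :
    (L:ℝ) * ((n.choose k : ℝ) * (4*lam)^k) ≤ 1/180 := by
  have hk0 : (0:ℝ) < k := by exact_mod_cast Nat.lt_of_lt_of_le (by norm_num) hk2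
  have hsplit : lam ^ (1-8*ε) * lam ^ (8*ε) = lam := by
    rw [← Real.rpow_add hlam]; norm_num
  set A := lam ^ (8*ε) with hAdef
  have hA : (0:ℝ) < A := Real.rpow_pos_of_pos hlam _
  have hrp : (0:ℝ) < lam ^ (1 - 8*ε) := Real.rpow_pos_of_pos hlam _
  -- n * lam ≤ A / (2592 ε)
  have hnl : (n:ℝ) * lam ≤ A / (2592 * ε) := by
    have h1 := mul_le_mul_of_nonneg_right hn hlam.le
    have h2 : 1 / (2592 * ε * lam ^ (1 - 8*ε)) * lam = A / (2592 * ε) := by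
      rw [div_mul_eq_mul_div, one_mul, div_eq_div_iff (by positivity) (by positivity)]
      linear_combination (-2592*ε) * hsplit
    linarith [h2 ▸ h1]
  have hinv : 1/(k:ℝ) ≤ 8*ε := by
    rw [div_le_iff₀ hk0]
    rw [div_le_iff₀ (by positivity)] at hk
    linarith
  have hbase : 16 * (n:ℝ) * lam / (k:ℝ) ≤ A / 20 := by
    have hp : ((n:ℝ) * lam) * (1/(k:ℝ)) ≤ (A/(2592*ε)) * (8*ε) :=
      mul_le_mul hnl hinv (by positivity) (by positivity)
    have he : (A/(2592*ε)) * (8*ε) = A/324 := by field_simp; ring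
    rw [he] at hp
    have : 16 * (n:ℝ) * lam / (k:ℝ) = 16 * (((n:ℝ) * lam) * (1/(k:ℝ))) := by ring
    rw [this]
    nlinarith
  -- choose bound
  have hchoose : (n.choose k : ℝ) ≤ (n:ℝ)^k / k.factorial := Nat.choose_le_pow_div k n
  have hfactpos : (0:ℝ) < k.factorial := by exact_mod_cast k.factorial_pos
  have hinvfact : (1:ℝ)/k.factorial ≤ 4^k/(k:ℝ)^k := by
    rw [div_le_div_iff₀ hfactpos (by positivity)]
    have := pow_self_le_four_pow_mul_factorial k
    nlinarith
  have h1 : (n.choose k : ℝ) * (4*lam)^k ≤ (16*(n:ℝ)*lam/(k:ℝ))^k := by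
    have e1 : (16*(n:ℝ)*lam/(k:ℝ))^k = (n:ℝ)^k * (4*lam)^k * (4^k/(k:ℝ)^k) := by
      rw [show 16*(n:ℝ)*lam = 4*((n:ℝ)*(4*lam)) by ring, div_pow, mul_pow, mul_pow]
      field_simp
    rw [e1]
    calc (n.choose k : ℝ) * (4*lam)^k ≤ ((n:ℝ)^k / k.factorial) * (4*lam)^k :=
          mul_le_mul_of_nonneg_right hchoose (by positivity)
      _ = (n:ℝ)^k * (4*lam)^k * (1/k.factorial) := by ring
      _ ≤ (n:ℝ)^k * (4*lam)^k * (4^k/(k:ℝ)^k) :=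
          mul_le_mul_of_nonneg_left hinvfact (by positivity)
  have h3 : (16*(n:ℝ)*lam/(k:ℝ))^k ≤ (A/20)^k := pow_le_pow_left₀ (by positivity) hbase k
  have h4 : (A/20)^k = lam ^ (8*ε*(k:ℝ)) * (1/20)^k := by
    rw [div_pow, hAdef, ← Real.rpow_natCast (lam ^ (8*ε)) k, ← Real.rpow_mul hlam.le]
    rw [div_pow, one_pow]
    ring
  have h8 : 1 ≤ 8*ε*(k:ℝ) := by
    rw [div_le_iff₀ (by positivity)] at hk
    linarith
  have h5 : lam ^ (8*ε*(k:ℝ)) ≤ lam := by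
    have := Real.rpow_le_rpow_of_exponent_ge hlam hlam'.le h8
    rwa [Real.rpow_one] at this
  have h20 : ((1:ℝ)/20)^k ≤ (1/20)^2 := pow_le_pow_of_le_one (by norm_num) (by norm_num) hk2
  have hcomb : (n.choose k : ℝ) * (4*lam)^k ≤ lam * (1/20)^k := by
    calc (n.choose k : ℝ) * (4*lam)^k ≤ (A/20)^k := le_trans h1 h3
      _ = lam ^ (8*ε*(k:ℝ)) * (1/20)^k := h4
      _ ≤ lam * (1/20)^k := mul_le_mul_of_nonneg_right h5 (by positivity)
  calc (L:ℝ) * ((n.choose k : ℝ) * (4*lam)^k) ≤ (1/lam) * (lam * (1/20)^k) :=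
        mul_le_mul hL hcomb (by positivity) (by positivity)
    _ = (1/20)^k := by field_simp
    _ ≤ (1/20)^2 := h20
    _ ≤ 1/180 := by norm_num

/-- With few samples, it is unlikely that any of the small disjoint regions receives
at least `2m` sample points (Lemma `many_points_dont_land`). -/
theorem many_points_dont_land
    (d : ℕ) (μ : Measure (Fin d → ℝ)) [IsProbabilityMeasure μ]
    (ε₁ ε₂ lam : ℝ)
    (hε₁ : 0 < ε₁) (hε₁' : ε₁ < 1 / 48)
    (hε₂ : 0 < ε₂) (hε₂' : ε₂ < 1 / 48)
    (hlam : 0 < lam) (hlam' : lam < 1)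
    (m : ℕ) (hm : 1 / (16 * max ε₁ ε₂) ≤ (m : ℝ))
    (L : ℕ) (R : Fin L → Set (Fin d → ℝ))
    (hRmeas : ∀ i, MeasurableSet (R i))
    (hRdisj : Pairwise (Function.onFun Disjoint R))
    (hRmass : ∀ i, μ (R i) ≤ ENNReal.ofReal (4 * lam))
    (hL : (L : ℝ) ≤ 1 / lam)
    (n : ℕ) (hn : (n : ℝ) ≤ 1 / (2592 * max ε₁ ε₂ * lam ^ (1 - 8 * max ε₁ ε₂))) :
    (Measure.pi fun _ : Fin n => μ)
      {X | ∃ i : Fin L,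
        2 * m ≤ (Finset.univ.filter fun j : Fin n => X j ∈ R i).card} ≤ 1 / 180 := by
  classical
  set ε := max ε₁ ε₂ with hεdef
  have hε : 0 < ε := lt_max_of_lt_left hε₁
  have hε' : ε < 1/48 := max_lt hε₁' hε₂'
  set k := 2 * m with hkdef
  set ν := Measure.pi fun _ : Fin n => μ with hν
  -- k bounds
  have hkR : 1/(8*ε) ≤ (k:ℝ) := by
    have : 1/(8*ε) = 2 * (1/(16*ε)) := by field_simp; ring
    rw [this]
    push_cast [hkdef]
    linarith
  have hm1 : 1 ≤ m := by
    have hpos : (0:ℝ) < (m:ℝ) := lt_of_lt_of_le (by positivity) hm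
    have : 0 < m := by exact_mod_cast hpos
    omega
  have hk2 : 2 ≤ k := by omega
  -- per-region bound
  have key : ∀ i : Fin L,
      ν {X | k ≤ (Finset.univ.filter fun j : Fin n => X j ∈ R i).card}
      ≤ (n.choose k : ℝ≥0∞) * ENNReal.ofReal (4 * lam) ^ k := by
    intro i
    have hcover : {X : Fin n → Fin d → ℝ | k ≤ (Finset.univ.filter fun j : Fin n => X j ∈ R i).card}
        ⊆ ⋃ S ∈ Finset.powersetCard k (Finset.univ : Finset (Fin n)),
            Set.univ.pi (fun j => if j ∈ S then R i else Set.univ) := by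
      intro X hX
      obtain ⟨t, ht, htc⟩ := Finset.exists_subset_card_eq hX
      refine Set.mem_iUnion₂.2 ⟨t, ?_, ?_⟩
      · exact Finset.mem_powersetCard_univ.2 htc
      · intro j _
        by_cases hj : j ∈ t
        · simp only [hj, if_pos]
          exact (Finset.mem_filter.1 (ht hj)).2
        · simp [hj]
    refine (measure_mono hcover).trans ?_
    refine (measure_biUnion_finset_le _ _).trans ?_
    have hA : ∀ S ∈ Finset.powersetCard k (Finset.univ : Finset (Fin n)),
        ν (Set.univ.pi (fun j => if j ∈ S then R i else Set.univ))
          ≤ ENNReal.ofReal (4*lam) ^ k := by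
      intro S hS
      rw [hν, Measure.pi_pi]
      have heq : ∀ j : Fin n, μ (if j ∈ S then R i else Set.univ)
          = if j ∈ S then μ (R i) else 1 := by
        intro j; split <;> simp
      simp_rw [heq]
      rw [Finset.prod_ite_mem, Finset.univ_inter, Finset.prod_const,
        (Finset.mem_powersetCard.1 hS).2]
      exact pow_le_pow_left' (hRmass i) k
    refine (Finset.sum_le_sum hA).trans ?_
    rw [Finset.sum_const, Finset.card_powersetCard, Finset.card_univ, Fintype.card_fin]
    simp [nsmul_eq_mul]
  calc ν {X | ∃ i : Fin L, k ≤ (Finset.univ.filter fun j : Fin n => X j ∈ R i).card}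
      ≤ ∑' i : Fin L, ν {X | k ≤ (Finset.univ.filter fun j : Fin n => X j ∈ R i).card} := by
        rw [Set.setOf_exists]
        exact measure_iUnion_le _
    _ ≤ ∑' i : Fin L, (n.choose k : ℝ≥0∞) * ENNReal.ofReal (4 * lam) ^ k :=
        ENNReal.tsum_le_tsum key
    _ = (L : ℝ≥0∞) * ((n.choose k : ℝ≥0∞) * ENNReal.ofReal (4 * lam) ^ k) := by
        rw [tsum_fintype]
        simp [Finset.sum_const, nsmul_eq_mul]
    _ = ENNReal.ofReal ((L:ℝ) * ((n.choose k : ℝ) * (4*lam)^k)) := by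
        rw [← ENNReal.ofReal_pow (by positivity), ← ENNReal.ofReal_natCast (n.choose k),
          ← ENNReal.ofReal_natCast L, ← ENNReal.ofReal_mul (by positivity),
          ← ENNReal.ofReal_mul (by positivity)]
    _ ≤ ENNReal.ofReal (1/180) := by
        apply ENNReal.ofReal_le_ofReal
        exact real_count_bound ε lam hε hlam hlam' L n k hL hkR hn hk2
    _ = 1/180 := by
        rw [ENNReal.ofReal_div_of_pos (by norm_num), ENNReal.ofReal_one, ENNReal.ofReal_ofNat]
end

section
/- Suppose φ₁, φ₂ ∈ [0, π] satisfy |cos(φ₁) − cos(φ₂)| ≤ c for some c ≥ 0. Then |φ₁ − φ₂| ≤ 4√c. -/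
open Real in
lemma cosine_inequality_aux (φ₁ φ₂ c : ℝ) (h1 : 0 ≤ φ₂) (h2 : φ₂ ≤ φ₁) (h3 : φ₁ ≤ π)
    (hc : 0 ≤ c) (h : |Real.cos φ₁ - Real.cos φ₂| ≤ c) : φ₁ - φ₂ ≤ 4 * Real.sqrt c := by
  set d := φ₁ - φ₂ with hd
  have hd0 : 0 ≤ d := by simp [hd]; linarith
  have hdpi : d ≤ π := by simp [hd]; linarith
  have hpi : (0:ℝ) < π := Real.pi_pos
  have hs : Real.sin (d/2) ≤ Real.sin ((φ₁+φ₂)/2) := by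
    rcases le_or_gt ((φ₁+φ₂)/2) (π/2) with ht | ht
    · exact Real.sin_le_sin_of_le_of_le_pi_div_two (by linarith) ht (by simp [hd]; linarith)
    · rw [← Real.sin_pi_sub ((φ₁+φ₂)/2)]
      exact Real.sin_le_sin_of_le_of_le_pi_div_two (by linarith) (by linarith)
        (by simp [hd]; linarith)
  have hsin0 : 0 ≤ Real.sin (d/2) :=
    Real.sin_nonneg_of_nonneg_of_le_pi (by linarith) (by linarith)
  have key : 2 * Real.sin (d/2) ^ 2 ≤ c := by
    have hcc := Real.cos_sub_cos φ₁ φ₂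
    have h' : Real.cos φ₂ - Real.cos φ₁ ≤ c := by
      have := abs_le.mp h; linarith [this.1]
    nlinarith [hcc, h']
  have hj : 2/π * (d/2) ≤ Real.sin (d/2) := Real.mul_le_sin (by linarith) (by linarith)
  have hd2 : d ^ 2 ≤ 16 * c := by
    have hple : π ≤ 4 := Real.pi_le_four
    have h1' : (2/π * (d/2)) ^ 2 ≤ Real.sin (d/2) ^ 2 := by
      apply pow_le_pow_left₀ (by positivity) hj
    have h2' : (2/π * (d/2)) ^ 2 = d^2 / π^2 := by field_simp
    have h3' : d^2 / π^2 ≤ Real.sin (d/2)^2 := h2' ▸ h1'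
    have h4' : d^2 ≤ Real.sin (d/2)^2 * π^2 := (div_le_iff₀ (by positivity)).mp h3'
    have hp2 : π^2 ≤ 16 := by nlinarith
    have h5 : Real.sin (d/2)^2 * π^2 ≤ (c/2) * 16 :=
      mul_le_mul (by linarith) hp2 (by positivity) (by linarith)
    nlinarith [h4', h5, hc]
  calc d ≤ Real.sqrt (16 * c) := (Real.le_sqrt hd0 (by positivity)).mpr hd2
    _ = 4 * Real.sqrt c := by
        rw [show (16:ℝ)*c = 4^2 * c by ring, Real.sqrt_mul (by positivity), Real.sqrt_sq (by norm_num)]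

/-- If two angles in `[0, π]` have cosines within `c`, the angles are within `4√c`
(Lemma `cosine_inequality`). -/
theorem cosine_inequality
    (φ₁ φ₂ c : ℝ) (h₁ : φ₁ ∈ Set.Icc 0 Real.pi) (h₂ : φ₂ ∈ Set.Icc 0 Real.pi)
    (hc : 0 ≤ c) (h : |Real.cos φ₁ - Real.cos φ₂| ≤ c) :
    |φ₁ - φ₂| ≤ 4 * Real.sqrt c := by
  obtain ⟨ha, hb⟩ := h₁
  obtain ⟨hc', hd'⟩ := h₂
  rcases le_total φ₂ φ₁ with hle | hle
  · rw [abs_of_nonneg (by linarith)]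
    exact cosine_inequality_aux φ₁ φ₂ c hc' hle hb hc h
  · rw [abs_of_nonpos (by linarith), neg_sub]
    exact cosine_inequality_aux φ₂ φ₁ c ha hle hd' hc (by rwa [abs_sub_comm] at h)
end

section
/- Let d ≥ 5, let z be a point chosen uniformly at random from the unit sphere {z ∈ ℝ^d : ‖z‖ = 1}, and let w ∈ ℝ^d be a fixed unit vector. If 0 ≤ t ≤ 1/(1370·d²), then for every s ∈ ℝ, the probability that ⟨w, z⟩ ∈ [s, s+t] is at most 1/10. -/
open MeasureTheory
open scoped ENNReal RealInnerProductSpace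

noncomputable section

/-!
The uniform measure of a set `A` of the sphere is the volume of the cone `(0, 1) • (S ∩ A)`
divided by the volume of the unit ball. Rotate `w` to the first basis vector of `ℝ^(n+1)` and
slice the cone over the slab `s ≤ ⟪w, z⟫ ≤ s + t` along the remaining coordinates `y ∈ ℝ^n`:
the slice is `{a | a² + ‖y‖² < 1, a / √(a² + ‖y‖²) ∈ [s, s + t]}`. Since `a ↦ a / √(a² + r²)`
has derivative at least `r²` on the unit disc, the slice has length at most `t / ‖y‖² ≤ 16 t`
when `‖y‖ ≥ 1/4`, and at most `2` anyway, so the cone has volume at most `(2 · 4⁻ⁿ + 16 t) Vₙ`.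
The unit ball of `ℝ^(n+1)` contains the cylinder `[-c, c] × B(ρ)` with `c² = 1/(n+1)`,
`ρ² = n/(n+1)`, of volume at least `2 Vₙ / (n+1)` by Bernoulli's inequality.
-/

/-- The uniform probability measure on the unit sphere centered at the origin in `ℝ^d`,
viewed as a measure on the ambient space `EuclideanSpace ℝ (Fin d)`. -/
def unitSphereUnif (d : ℕ) : Measure (EuclideanSpace ℝ (Fin d)) :=
  ((volume : Measure (EuclideanSpace ℝ (Fin d))).toSphere Set.univ)⁻¹ •
    Measure.map Subtype.val (volume : Measure (EuclideanSpace ℝ (Fin d))).toSphere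

open Set Metric
open scoped Pointwise

theorem Ioo_smul_sphere_zero_inter {E : Type*} [NormedAddCommGroup E] [NormedSpace ℝ E]
    (A : Set E) :
    Ioo (0 : ℝ) 1 • (sphere (0 : E) 1 ∩ A) = {x | ‖x‖ ∈ Ioo 0 1 ∧ ‖x‖⁻¹ • x ∈ A} := by
  ext x
  constructor
  · rintro ⟨c, hc, z, ⟨hz, hzA⟩, rfl⟩
    rw [mem_sphere_zero_iff_norm] at hz
    have hnorm : ‖c • z‖ = c := by rw [norm_smul, hz, mul_one, Real.norm_of_nonneg hc.1.le]
    change ‖c • z‖ ∈ Ioo 0 1 ∧ ‖c • z‖⁻¹ • c • z ∈ A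
    rw [hnorm, smul_smul, inv_mul_cancel₀ hc.1.ne', one_smul]
    exact ⟨hc, hzA⟩
  · rintro ⟨hx, hxA⟩
    refine ⟨‖x‖, hx, ‖x‖⁻¹ • x, ⟨?_, hxA⟩, smul_inv_smul₀ hx.1.ne' x⟩
    rw [mem_sphere_zero_iff_norm, norm_smul, norm_inv, norm_norm, inv_mul_cancel₀ hx.1.ne']

theorem unitSphereUnif_apply {d : ℕ} (hd : d ≠ 0) {A : Set (EuclideanSpace ℝ (Fin d))}
    (hA : MeasurableSet A) :
    unitSphereUnif d A = volume (Ioo (0 : ℝ) 1 • (sphere (0 : EuclideanSpace ℝ (Fin d)) 1 ∩ A)) /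
      volume (ball (0 : EuclideanSpace ℝ (Fin d)) 1) := by
  rw [unitSphereUnif, Measure.smul_apply, smul_eq_mul,
    Measure.map_apply measurable_subtype_coe hA,
    Measure.toSphere_apply' _ (measurable_subtype_coe hA), Measure.toSphere_apply_univ,
    Subtype.image_preimage_coe, mul_comm, ← div_eq_mul_inv,
    ENNReal.mul_div_mul_left _ _ (by simpa using hd) (by simp)]

def coneProfile (s t : ℝ) : Set (ℝ × ℝ) := {p | p.2 ∈ Ioo 0 1 ∧ p.1 / p.2 ∈ Icc s (s + t)}

theorem Ioo_smul_sphere_inter_setOf_inner_mem_Icc {E : Type*} [NormedAddCommGroup E]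
    [InnerProductSpace ℝ E] (w : E) (s t : ℝ) :
    Ioo (0 : ℝ) 1 • (sphere (0 : E) 1 ∩ {z | ⟪w, z⟫ ∈ Icc s (s + t)}) =
      {x | (⟪w, x⟫, ‖x‖) ∈ coneProfile s t} := by
  rw [Ioo_smul_sphere_zero_inter]
  ext x
  simp only [coneProfile, mem_ofPred_eq, real_inner_smul_right, inv_mul_eq_div]

def headTail (n : ℕ) (x : EuclideanSpace ℝ (Fin (n + 1))) : ℝ × EuclideanSpace ℝ (Fin n) :=
  (x 0, WithLp.toLp 2 fun i => x i.succ)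

theorem measurePreserving_headTail (n : ℕ) : MeasurePreserving (headTail n) :=
  ((MeasurePreserving.id volume).prod
    (EuclideanSpace.volume_preserving_symm_measurableEquiv_toLp (Fin n)).symm).comp
    ((volume_preserving_piFinSuccAbove (fun _ : Fin (n + 1) => ℝ) 0).comp
      (EuclideanSpace.volume_preserving_symm_measurableEquiv_toLp (Fin (n + 1))))

theorem norm_sq_eq_headTail {n : ℕ} (x : EuclideanSpace ℝ (Fin (n + 1))) :
    ‖x‖ ^ 2 = (headTail n x).1 ^ 2 + ‖(headTail n x).2‖ ^ 2 := by
  simp [headTail, EuclideanSpace.norm_sq_eq, Fin.sum_univ_succ]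

theorem exists_orthonormalBasis_apply_eq {ι E : Type*} [Fintype ι] [NormedAddCommGroup E]
    [InnerProductSpace ℝ E] [FiniteDimensional ℝ E] (hcard : Module.finrank ℝ E = Fintype.card ι)
    (i : ι) {w : E} (hw : ‖w‖ = 1) : ∃ b : OrthonormalBasis ι ℝ E, b i = w := by
  have hw' : Orthonormal ℝ (({i} : Set ι).domRestrict fun _ => w) :=
    ⟨fun _ => hw, fun j k hjk => absurd (Subtype.ext (j.2.trans k.2.symm)) hjk⟩
  obtain ⟨b, hb⟩ := hw'.exists_orthonormalBasis_extension_of_card_eq hcard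
  exact ⟨b, hb i rfl⟩

theorem volume_setOf_inner_norm_mem {n : ℕ} {w : EuclideanSpace ℝ (Fin (n + 1))} (hw : ‖w‖ = 1)
    {S : Set (ℝ × ℝ)} (hS : MeasurableSet S) :
    volume {x | (⟪w, x⟫, ‖x‖) ∈ S} =
      ∫⁻ y : EuclideanSpace ℝ (Fin n), volume {a : ℝ | (a, √(a ^ 2 + ‖y‖ ^ 2)) ∈ S} := by
  obtain ⟨b, hb⟩ := exists_orthonormalBasis_apply_eq (by simp) (0 : Fin (n + 1)) hw
  set T : Set (ℝ × EuclideanSpace ℝ (Fin n)) := {p | (p.1, √(p.1 ^ 2 + ‖p.2‖ ^ 2)) ∈ S}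
  have hT : MeasurableSet T := (by fun_prop : Continuous fun p : ℝ × EuclideanSpace ℝ (Fin n) =>
    (p.1, √(p.1 ^ 2 + ‖p.2‖ ^ 2))).measurable hS
  have hpre : {x | (⟪w, x⟫, ‖x‖) ∈ S} = b.repr ⁻¹' (headTail n ⁻¹' T) := by
    ext x
    simp only [mem_ofPred_eq, mem_preimage, T, ← norm_sq_eq_headTail, b.repr.norm_map,
      Real.sqrt_sq (norm_nonneg x)]
    rw [headTail, b.repr_apply_apply, hb]
  rw [hpre, b.measurePreserving_repr.measure_preimage
      ((measurePreserving_headTail n).measurable hT).nullMeasurableSet,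
    (measurePreserving_headTail n).measure_preimage hT.nullMeasurableSet,
    Measure.volume_eq_prod, Measure.prod_apply_symm hT]
  rfl

theorem volume_le_of_mul_sub_le_sub {D : Set ℝ} {f : ℝ → ℝ} {k : ℝ} (hk : 0 < k)
    (hf : ∀ a ∈ D, ∀ b ∈ D, a ≤ b → k * (b - a) ≤ f b - f a) (s t : ℝ) :
    volume {a ∈ D | f a ∈ Icc s (s + t)} ≤ ENNReal.ofReal (t / k) := by
  refine (Real.volume_le_diam _).trans (ediam_le_of_forall_dist_le ?_)
  suffices key : ∀ a ∈ {a ∈ D | f a ∈ Icc s (s + t)}, ∀ b ∈ {a ∈ D | f a ∈ Icc s (s + t)},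
      a ≤ b → b - a ≤ t / k by
    intro a ha b hb
    rw [Real.dist_eq]
    rcases le_total a b with hab | hba
    · rw [abs_of_nonpos (by linarith)]; linarith [key a ha b hb hab]
    · rw [abs_of_nonneg (by linarith)]; exact key b hb a ha hba
  rintro a ⟨haD, has, hat⟩ b ⟨hbD, hbs, hbt⟩ hab
  rw [le_div_iff₀' hk]
  linarith [hf a haD b hbD hab]

theorem hasDerivAt_div_sqrt_sq_add_sq {r : ℝ} (hr : r ≠ 0) (a : ℝ) :
    HasDerivAt (fun x => x / √(x ^ 2 + r ^ 2))
      (r ^ 2 / ((a ^ 2 + r ^ 2) * √(a ^ 2 + r ^ 2))) a := by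
  have hpos : 0 < a ^ 2 + r ^ 2 := by positivity
  have hsqrt : HasDerivAt (fun x => √(x ^ 2 + r ^ 2)) (1 / (2 * √(a ^ 2 + r ^ 2)) * (2 * a)) a :=
    (Real.hasDerivAt_sqrt hpos.ne').comp a (((hasDerivAt_pow 2 a).add_const (r ^ 2)).congr_deriv
      (by ring))
  refine ((hasDerivAt_id a).div hsqrt (Real.sqrt_pos.2 hpos).ne').congr_deriv ?_
  have hsq : √(a ^ 2 + r ^ 2) ^ 2 = a ^ 2 + r ^ 2 := Real.sq_sqrt hpos.le
  simp only [id_eq, hsq]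
  field_simp
  linear_combination hsq

theorem mul_sub_le_div_sqrt_sub_div_sqrt {r : ℝ} (hr : r ≠ 0) {a b : ℝ}
    (ha : a ∈ Icc (-√(1 - r ^ 2)) √(1 - r ^ 2)) (hb : b ∈ Icc (-√(1 - r ^ 2)) √(1 - r ^ 2))
    (hab : a ≤ b) :
    r ^ 2 * (b - a) ≤ b / √(b ^ 2 + r ^ 2) - a / √(a ^ 2 + r ^ 2) := by
  set g := fun x => x / √(x ^ 2 + r ^ 2)
  have hderiv : ∀ x ∈ interior (Icc (-√(1 - r ^ 2)) √(1 - r ^ 2)), r ^ 2 ≤ deriv g x := by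
    intro x hx
    rw [interior_Icc, mem_Ioo, ← abs_lt, Real.lt_sqrt (abs_nonneg x), sq_abs] at hx
    have hpos : 0 < x ^ 2 + r ^ 2 := by positivity
    have hsqrt : √(x ^ 2 + r ^ 2) ≤ 1 := Real.sqrt_le_one.2 (by linarith)
    rw [(hasDerivAt_div_sqrt_sq_add_sq hr x).deriv, le_div_iff₀ (by positivity)]
    have : (x ^ 2 + r ^ 2) * √(x ^ 2 + r ^ 2) ≤ 1 :=
      mul_le_one₀ (by linarith) (Real.sqrt_nonneg _) hsqrt
    nlinarith [sq_nonneg r]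
  exact (convex_Icc _ _).mul_sub_le_image_sub_of_le_deriv
    (fun x _ => (hasDerivAt_div_sqrt_sq_add_sq hr x).continuousAt.continuousWithinAt)
    (fun x _ => (hasDerivAt_div_sqrt_sq_add_sq hr x).differentiableAt.differentiableWithinAt)
    hderiv a ha b hb hab

theorem volume_slice_coneProfile_le {F : Type*} [SeminormedAddCommGroup F] (s : ℝ) {t : ℝ}
    (ht : 0 ≤ t) (y : F) :
    volume {a : ℝ | (a, √(a ^ 2 + ‖y‖ ^ 2)) ∈ coneProfile s t} ≤
      (ball 0 4⁻¹).indicator (fun _ => 2) y +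
        (ball 0 1).indicator (fun _ => ENNReal.ofReal (16 * t)) y := by
  set r := ‖y‖
  have hsq_lt : ∀ a, (a, √(a ^ 2 + r ^ 2)) ∈ coneProfile s t → a ^ 2 + r ^ 2 < 1 := fun a ha => by
    simpa using (Real.sqrt_lt' one_pos).1 ha.1.2
  rcases lt_or_ge r 4⁻¹ with hr4 | hr4
  · have hsub : {a : ℝ | (a, √(a ^ 2 + r ^ 2)) ∈ coneProfile s t} ⊆ Ioo (-1) 1 := fun a ha => by
      have := hsq_lt a ha
      constructor <;> nlinarith [sq_nonneg r]
    calc _ ≤ volume (Ioo (-1 : ℝ) 1) := measure_mono hsub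
      _ = 2 := by norm_num
      _ ≤ _ := by
        rw [indicator_of_mem (mem_ball_zero_iff.2 hr4)]
        exact le_self_add
  rcases lt_or_ge r 1 with hr1 | hr1
  · have hr0 : r ≠ 0 := by positivity
    have hsub : {a : ℝ | (a, √(a ^ 2 + r ^ 2)) ∈ coneProfile s t} ⊆
        {a ∈ Icc (-√(1 - r ^ 2)) √(1 - r ^ 2) | a / √(a ^ 2 + r ^ 2) ∈ Icc s (s + t)} :=
      fun a ha => ⟨abs_le.1 (Real.abs_le_sqrt (by linarith [hsq_lt a ha])), ha.2⟩
    calc _ ≤ _ := measure_mono hsub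
      _ ≤ ENNReal.ofReal (t / r ^ 2) := volume_le_of_mul_sub_le_sub (by positivity)
          (fun a ha b hb hab => mul_sub_le_div_sqrt_sub_div_sqrt hr0 ha hb hab) s t
      _ ≤ ENNReal.ofReal (16 * t) := by
        have h16 : 1 ≤ 16 * r ^ 2 := by nlinarith
        gcongr
        rw [div_le_iff₀ (by positivity)]
        nlinarith [mul_le_mul_of_nonneg_left h16 ht]
      _ ≤ _ := by
        rw [indicator_of_mem (mem_ball_zero_iff.2 hr1)]
        exact le_add_self
  · have hempty : {a : ℝ | (a, √(a ^ 2 + r ^ 2)) ∈ coneProfile s t} = ∅ :=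
      eq_empty_of_forall_notMem fun a ha => by nlinarith [hsq_lt a ha, sq_nonneg a]
    simp [hempty]

theorem measurableSet_coneProfile (s t : ℝ) : MeasurableSet (coneProfile s t) :=
  (measurable_snd measurableSet_Ioo).inter ((measurable_fst.div measurable_snd) measurableSet_Icc)

theorem volume_setOf_coneProfile_le {n : ℕ} {w : EuclideanSpace ℝ (Fin (n + 1))} (hw : ‖w‖ = 1)
    (s : ℝ) {t : ℝ} (ht : 0 ≤ t) :
    volume {x | (⟪w, x⟫, ‖x‖) ∈ coneProfile s t} ≤
      ENNReal.ofReal (2 * 4⁻¹ ^ n + 16 * t) * volume (ball (0 : EuclideanSpace ℝ (Fin n)) 1) := by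
  rw [volume_setOf_inner_norm_mem hw (measurableSet_coneProfile s t)]
  calc _ ≤ ∫⁻ y : EuclideanSpace ℝ (Fin n), (ball 0 4⁻¹).indicator (fun _ => 2) y +
          (ball 0 1).indicator (fun _ => ENNReal.ofReal (16 * t)) y :=
        lintegral_mono (volume_slice_coneProfile_le s ht)
    _ = _ := by
      rw [lintegral_add_left (measurable_const.indicator measurableSet_ball),
        lintegral_indicator_const measurableSet_ball, lintegral_indicator_const measurableSet_ball,
        Measure.addHaar_ball_of_pos _ _ (by norm_num), finrank_euclideanSpace_fin,
        ENNReal.ofReal_add (by positivity) (by positivity), ENNReal.ofReal_mul zero_le_two]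
      simp only [ENNReal.ofReal_ofNat]
      ring

theorem ofReal_mul_volume_ball_le_volume_ball_succ (n : ℕ) {c ρ : ℝ} (hρ : 0 ≤ ρ)
    (hcρ : c ^ 2 + ρ ^ 2 ≤ 1) :
    ENNReal.ofReal (2 * c * ρ ^ n) * volume (ball (0 : EuclideanSpace ℝ (Fin n)) 1) ≤
      volume (ball (0 : EuclideanSpace ℝ (Fin (n + 1))) 1) := by
  have hball : ball (0 : EuclideanSpace ℝ (Fin (n + 1))) 1 =
      {x | (⟪EuclideanSpace.single 0 1, x⟫, ‖x‖) ∈ univ ×ˢ Iio 1} := by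
    ext x; simp
  rw [hball, volume_setOf_inner_norm_mem (by simp) (MeasurableSet.univ.prod measurableSet_Iio)]
  have hslice : ∀ y : EuclideanSpace ℝ (Fin n),
      (closedBall 0 ρ).indicator (fun _ => ENNReal.ofReal (2 * c)) y ≤
        volume {a : ℝ | (a, √(a ^ 2 + ‖y‖ ^ 2)) ∈ univ ×ˢ Iio 1} := by
    intro y
    by_cases hy : y ∈ closedBall 0 ρ
    · rw [indicator_of_mem hy]
      have hsub : Ioo (-c) c ⊆ {a : ℝ | (a, √(a ^ 2 + ‖y‖ ^ 2)) ∈ univ ×ˢ Iio 1} := by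
        intro a ha
        have hy' : ‖y‖ ≤ ρ := mem_closedBall_zero_iff.1 hy
        have ha' : a ^ 2 < c ^ 2 := sq_lt_sq' ha.1 ha.2
        simp only [mem_ofPred_eq, mem_prod, mem_univ, mem_Iio, true_and]
        rw [Real.sqrt_lt' one_pos]
        nlinarith [norm_nonneg y]
      calc ENNReal.ofReal (2 * c) = volume (Ioo (-c) c) := by rw [Real.volume_Ioo]; ring_nf
        _ ≤ _ := measure_mono hsub
    · rw [indicator_of_notMem hy]; exact bot_le
  calc _ = ENNReal.ofReal (2 * c) * volume (closedBall (0 : EuclideanSpace ℝ (Fin n)) ρ) := by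
        rw [Measure.addHaar_closedBall _ _ hρ, finrank_euclideanSpace_fin, ← mul_assoc,
          ← ENNReal.ofReal_mul' (by positivity)]
    _ = ∫⁻ y, (closedBall 0 ρ).indicator (fun _ => ENNReal.ofReal (2 * c)) y :=
        (lintegral_indicator_const measurableSet_closedBall _).symm
    _ ≤ _ := lintegral_mono hslice

theorem inv_add_one_le_div_add_one_pow (n : ℕ) : ((n : ℝ) + 1)⁻¹ ≤ ((n : ℝ) / (n + 1)) ^ n := by
  have hm : (0 : ℝ) < n + 1 := by positivity
  have hbern := one_add_mul_le_pow (a := -((n : ℝ) + 1)⁻¹) (by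
    linarith [inv_le_one_of_one_le₀ (by linarith [n.cast_nonneg (α := ℝ)] : (1 : ℝ) ≤ n + 1)]) n
  calc ((n : ℝ) + 1)⁻¹ = 1 + n * -((n : ℝ) + 1)⁻¹ := by field_simp; ring
    _ ≤ (1 + -((n : ℝ) + 1)⁻¹) ^ n := hbern
    _ = ((n : ℝ) / (n + 1)) ^ n := by congr 1; field_simp; ring

theorem ofReal_two_div_mul_volume_ball_le_volume_ball_succ (n : ℕ) :
    ENNReal.ofReal (2 / (n + 1)) * volume (ball (0 : EuclideanSpace ℝ (Fin n)) 1) ≤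
      volume (ball (0 : EuclideanSpace ℝ (Fin (n + 1))) 1) := by
  set c := √(((n : ℝ) + 1)⁻¹)
  set ρ := √((n : ℝ) / (n + 1))
  have hc : c ^ 2 = ((n : ℝ) + 1)⁻¹ := Real.sq_sqrt (by positivity)
  have hρ : ρ ^ 2 = (n : ℝ) / (n + 1) := Real.sq_sqrt (by positivity)
  have hcρ : c ≤ ρ ^ n := by
    rw [Real.sqrt_le_left (by positivity), ← pow_mul, mul_comm, pow_mul, hρ]
    exact inv_add_one_le_div_add_one_pow n
  refine le_trans ?_ (ofReal_mul_volume_ball_le_volume_ball_succ n (c := c) (ρ := ρ)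
    (Real.sqrt_nonneg _) (by rw [hc, hρ]; field_simp; linarith))
  gcongr
  calc 2 / ((n : ℝ) + 1) = 2 * c * c := by rw [mul_assoc, ← sq, hc, div_eq_mul_inv]
    _ ≤ 2 * c * ρ ^ n := by gcongr

theorem fifty_mul_add_one_le_four_pow {n : ℕ} (hn : 4 ≤ n) : 50 * (n + 1) ≤ 4 ^ n := by
  induction n, hn using Nat.le_induction with
  | base => norm_num
  | succ n _ ih => rw [pow_succ]; omega

theorem two_mul_inv_four_pow_add_le {n : ℕ} (hn : 4 ≤ n) {t : ℝ}
    (ht : t ≤ 1 / (1370 * ((n : ℝ) + 1) ^ 2)) :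
    2 * 4⁻¹ ^ n + 16 * t ≤ 1 / 10 * (2 / (n + 1)) := by
  have hm : (5 : ℝ) ≤ n + 1 := by norm_cast; omega
  have hpow : 50 * ((n : ℝ) + 1) ≤ 4 ^ n := by exact_mod_cast fifty_mul_add_one_le_four_pow hn
  have hfirst : 2 * 4⁻¹ ^ n ≤ 1 / (25 * ((n : ℝ) + 1)) := by
    rw [inv_pow, ← div_eq_mul_inv, div_le_div_iff₀ (by positivity) (by positivity)]
    linarith
  have hsecond : 16 * t ≤ 4 / (25 * ((n : ℝ) + 1)) := by
    calc 16 * t ≤ 16 * (1 / (1370 * ((n : ℝ) + 1) ^ 2)) := by gcongr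
      _ ≤ 4 / (25 * ((n : ℝ) + 1)) := by
        rw [mul_one_div, div_le_div_iff₀ (by positivity) (by positivity)]
        nlinarith
  calc 2 * 4⁻¹ ^ n + 16 * t ≤ 1 / (25 * ((n : ℝ) + 1)) + 4 / (25 * ((n : ℝ) + 1)) :=
        add_le_add hfirst hsecond
    _ = 1 / 10 * (2 / (n + 1)) := by field_simp; norm_num

/-- For a uniform point `z` on the unit sphere in `ℝ^d` (`d ≥ 5`) and a fixed unit vector
`w`, the inner product `⟪w, z⟫` lands in any interval of length `t ≤ 1/(1370 d²)` with
probability at most `1/10` (Lemma `dot_product_probability_inside_interval`). -/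
theorem dot_product_probability_inside_interval
    (d : ℕ) (hd : 5 ≤ d)
    (w : EuclideanSpace ℝ (Fin d)) (hw : ‖w‖ = 1)
    (t : ℝ) (ht0 : 0 ≤ t) (ht : t ≤ 1 / (1370 * (d : ℝ) ^ 2)) (s : ℝ) :
    unitSphereUnif d {z | ⟪w, z⟫ ∈ Set.Icc s (s + t)} ≤ ENNReal.ofReal (1 / 10) := by
  obtain ⟨n, rfl⟩ : ∃ n, d = n + 1 := ⟨d - 1, by omega⟩
  have hmeas : MeasurableSet {z : EuclideanSpace ℝ (Fin (n + 1)) | ⟪w, z⟫ ∈ Icc s (s + t)} :=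
    measurableSet_Icc.preimage (by fun_prop)
  rw [unitSphereUnif_apply n.add_one_ne_zero hmeas, Ioo_smul_sphere_inter_setOf_inner_mem_Icc]
  refine ENNReal.div_le_of_le_mul ?_
  calc _ ≤ ENNReal.ofReal (2 * 4⁻¹ ^ n + 16 * t) * volume (ball (0 : EuclideanSpace ℝ (Fin n)) 1) :=
        volume_setOf_coneProfile_le hw s ht0
    _ ≤ ENNReal.ofReal (1 / 10) * (ENNReal.ofReal (2 / (n + 1)) *
          volume (ball (0 : EuclideanSpace ℝ (Fin n)) 1)) := by
        rw [← mul_assoc, ← ENNReal.ofReal_mul (by norm_num)]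
        gcongr
        exact two_mul_inv_four_pow_add_le (by omega) (by exact_mod_cast ht)
    _ ≤ _ := by
        gcongr
        exact ofReal_two_div_mul_volume_ball_le_volume_ball_succ n

end
end

section
/- Let d ≥ 3 and define Ψ(θ) = (∫₀^θ sin^{d−2}(φ) dφ) / (∫₀^π sin^{d−2}(φ) dφ) for θ ∈ [0, π]. Then for all 0 < θ ≤ π (so that Ψ(θ) > 0) and 0 ≤ c ≤ 1, Ψ(cθ)/Ψ(θ) ≥ c^{d−1}. -/
noncomputable section

open Real intervalIntegral

/-- Concavity of sin gives `c * sin x ≤ sin (c * x)` for `x ∈ [0, π]`, `c ∈ [0,1]`. -/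
lemma csin_le_sin_c (c x : ℝ) (hc : 0 ≤ c) (hc' : c ≤ 1) (hx : 0 ≤ x) (hx' : x ≤ Real.pi) :
    c * Real.sin x ≤ Real.sin (c * x) := by
  have h := strictConcaveOn_sin_Icc.concaveOn.2 (Set.mem_Icc.2 ⟨hx, hx'⟩)
    (Set.mem_Icc.2 ⟨le_refl 0, Real.pi_pos.le⟩) hc (show (0:ℝ) ≤ 1 - c by linarith) (by ring)
  simpa using h

/-- `Ψ(θ)`: the fraction of the surface of a `(d−1)`-sphere covered by a spherical cap
of angle `θ`. -/
def Psi (d : ℕ) (θ : ℝ) : ℝ :=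
  (∫ φ in (0 : ℝ)..θ, Real.sin φ ^ (d - 2)) / (∫ φ in (0 : ℝ)..Real.pi, Real.sin φ ^ (d - 2))

/-- For `0 < θ ≤ π` and `0 ≤ c ≤ 1`, `Ψ(cθ)/Ψ(θ) ≥ c^(d−1)`
(Lemma `exponential_bound_on_behavior_of_psi`). -/
theorem psi_ratio_lower_bound
    (d : ℕ) (hd : 3 ≤ d) (θ c : ℝ)
    (hθ : 0 < θ) (hθ' : θ ≤ Real.pi) (hc : 0 ≤ c) (hc' : c ≤ 1) :
    c ^ (d - 1) ≤ Psi d (c * θ) / Psi d θ := by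
  set n := d - 2 with hn
  have hd1 : d - 1 = n + 1 := by omega
  set A := ∫ φ in (0:ℝ)..(c * θ), Real.sin φ ^ n with hA
  set B := ∫ φ in (0:ℝ)..θ, Real.sin φ ^ n with hB
  set D := ∫ φ in (0:ℝ)..Real.pi, Real.sin φ ^ n with hD
  have hDpos : 0 < D := integral_sin_pow_pos n
  have hBpos : 0 < B := by
    apply intervalIntegral.intervalIntegral_pos_of_pos_on
    · exact (Real.continuous_sin.pow n).intervalIntegrable 0 θ
    · intro x hx
      exact pow_pos (Real.sin_pos_of_pos_of_lt_pi hx.1 (lt_of_lt_of_le hx.2 hθ')) n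
    · exact hθ
  have hratio : Psi d (c * θ) / Psi d θ = A / B := by
    unfold Psi
    rw [← hn, ← hA, ← hB, ← hD]
    rw [div_div_div_eq, mul_comm A D, mul_div_mul_left _ _ hDpos.ne']
  rw [hratio, le_div_iff₀ hBpos]
  -- substitution: A = c * ∫ x in 0..θ, sin(c*x)^n
  have hsub : A = c * ∫ x in (0:ℝ)..θ, Real.sin (c * x) ^ n := by
    rw [hA]
    have := intervalIntegral.smul_integral_comp_mul_left
      (f := fun φ => Real.sin φ ^ n) (a := (0:ℝ)) (b := θ) c
    simp only [smul_eq_mul, mul_zero] at this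
    rw [← this]
  have hmono : c ^ n * B ≤ ∫ x in (0:ℝ)..θ, Real.sin (c * x) ^ n := by
    have : c ^ n * B = ∫ x in (0:ℝ)..θ, c ^ n * Real.sin x ^ n := by
      rw [hB, ← intervalIntegral.integral_const_mul]
    rw [this]
    apply intervalIntegral.integral_mono_on hθ.le
    · exact (continuous_const.mul (Real.continuous_sin.pow n)).intervalIntegrable 0 θ
    · exact ((Real.continuous_sin.comp (continuous_const.mul continuous_id)).pow n).intervalIntegrable 0 θ
    · intro x hx
      have h1 : c * Real.sin x ≤ Real.sin (c * x) :=
        csin_le_sin_c c x hc hc' hx.1 (le_trans hx.2 hθ')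
      have h2 : 0 ≤ c * Real.sin x :=
        mul_nonneg hc (Real.sin_nonneg_of_nonneg_of_le_pi hx.1 (le_trans hx.2 hθ'))
      calc c ^ n * Real.sin x ^ n = (c * Real.sin x) ^ n := by rw [mul_pow]
        _ ≤ Real.sin (c * x) ^ n := pow_le_pow_left₀ h2 h1 n
  calc c ^ (d - 1) * B = c * (c ^ n * B) := by rw [hd1]; ring
    _ ≤ c * ∫ x in (0:ℝ)..θ, Real.sin (c * x) ^ n :=
        mul_le_mul_of_nonneg_left hmono hc
    _ = A := hsub.symm

end
end

section
/- Let d ≥ 3 and define Ψ(θ) = (∫₀^θ sin^{d−2}(φ) dφ) / (∫₀^π sin^{d−2}(φ) dφ) for θ ∈ [0, π]. Then for all 0 < θ ≤ π/2 and 0 < c ≤ 1, Ψ(cθ)/Ψ(θ) ≤ c·(sin(cθ)/sin(θ))^{d−2}. -/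
open Real MeasureTheory intervalIntegral Set

noncomputable section

lemma aux_mul_sin_le {t x : ℝ} (ht : 0 ≤ t) (ht' : t ≤ 1) (hx : 0 ≤ x) (hx' : x ≤ π) :
    t * Real.sin x ≤ Real.sin (t * x) := by
  have h := strictConcaveOn_sin_Icc.concaveOn.2
    (Set.mem_Icc.2 ⟨hx, hx'⟩) (Set.mem_Icc.2 ⟨le_refl 0, Real.pi_pos.le⟩)
    ht (show (0:ℝ) ≤ 1 - t by linarith) (by ring)
  simpa using h

lemma aux_hasDeriv (c x : ℝ) (hx : Real.sin x ≠ 0) :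
    HasDerivAt (fun y => Real.sin (c * y) / Real.sin y)
      ((Real.cos (c * x) * c * Real.sin x - Real.sin (c * x) * Real.cos x) / Real.sin x ^ 2) x := by
  have h1 : HasDerivAt (fun y : ℝ => c * y) c x := by
    simpa using (hasDerivAt_id x).const_mul c
  have h2 : HasDerivAt (fun y => Real.sin (c * y)) (Real.cos (c * x) * c) x :=
    (Real.hasDerivAt_sin (c * x)).comp x h1
  exact h2.div (Real.hasDerivAt_sin x) hx

lemma aux_num_nonneg {c x : ℝ} (hc : 0 < c) (hc' : c ≤ 1) (hx : 0 ≤ x) (hx' : x ≤ π / 2) :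
    0 ≤ Real.cos (c * x) * c * Real.sin x - Real.sin (c * x) * Real.cos x := by
  have hxπ : x ≤ π := le_trans hx' (by linarith [pi_pos])
  have h1 : (1 - c) * Real.sin x ≤ Real.sin ((1 - c) * x) :=
    aux_mul_sin_le (by linarith) (by linarith) hx hxπ
  have h2 : Real.sin ((1 - c) * x) = Real.sin x * Real.cos (c * x) - Real.cos x * Real.sin (c * x) := by
    rw [show (1 - c) * x = x - c * x by ring, Real.sin_sub]
  have h3 : Real.cos (c * x) ≤ 1 := Real.cos_le_one _
  have h4 : 0 ≤ Real.sin x := Real.sin_nonneg_of_nonneg_of_le_pi hx hxπ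
  nlinarith [h1, h2, mul_nonneg (mul_nonneg (by linarith : (0:ℝ) ≤ 1 - c) h4)
    (by linarith : (0:ℝ) ≤ 1 - Real.cos (c * x))]

lemma aux_sin_ratio {c ψ θ : ℝ} (hc : 0 < c) (hc' : c ≤ 1)
    (hψ : 0 ≤ ψ) (hψθ : ψ ≤ θ) (hθ : θ ≤ π / 2) :
    Real.sin (c * ψ) * Real.sin θ ≤ Real.sin (c * θ) * Real.sin ψ := by
  rcases eq_or_lt_of_le hψ with h0 | h0
  · simp [← h0]
  have hθpos : 0 < θ := lt_of_lt_of_le h0 hψθ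
  have hsinpos : ∀ x ∈ Icc ψ θ, 0 < Real.sin x := fun x hx =>
    Real.sin_pos_of_pos_of_lt_pi (lt_of_lt_of_le h0 hx.1)
      (lt_of_le_of_lt (le_trans hx.2 hθ) (by linarith [pi_pos]))
  have hmono : MonotoneOn (fun x => Real.sin (c * x) / Real.sin x) (Icc ψ θ) := by
    apply monotoneOn_of_deriv_nonneg (convex_Icc _ _)
    · exact ContinuousOn.div (by fun_prop) (by fun_prop)
        (fun x hx => (hsinpos x hx).ne')
    · intro x hx
      rw [interior_Icc] at hx
      exact (aux_hasDeriv c x (hsinpos x (Ioo_subset_Icc_self hx)).ne').differentiableAt.differentiableWithinAt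
    · intro x hx
      rw [interior_Icc] at hx
      have hs := (hsinpos x (Ioo_subset_Icc_self hx)).ne'
      rw [(aux_hasDeriv c x hs).deriv]
      apply div_nonneg
      · exact aux_num_nonneg hc hc' (le_of_lt (lt_of_lt_of_le h0 (le_of_lt hx.1)))
          (le_trans (le_of_lt hx.2) hθ)
      · positivity
  have := hmono (left_mem_Icc.2 hψθ) (right_mem_Icc.2 hψθ) hψθ
  have hsψ := hsinpos ψ (left_mem_Icc.2 hψθ)
  have hsθ := hsinpos θ (right_mem_Icc.2 hψθ)
  rw [div_le_div_iff₀ hsψ hsθ] at this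
  linarith

/-- For `0 < θ ≤ π/2` and `0 < c ≤ 1`, `Ψ(cθ)/Ψ(θ) ≤ c (sin(cθ)/sin(θ))^(d−2)`
(Lemma `upper_bound_psi`). -/
theorem psi_ratio_upper_bound
    (d : ℕ) (hd : 3 ≤ d) (θ c : ℝ)
    (hθ : 0 < θ) (hθ' : θ ≤ Real.pi / 2) (hc : 0 < c) (hc' : c ≤ 1) :
    Psi d (c * θ) / Psi d θ ≤ c * (Real.sin (c * θ) / Real.sin θ) ^ (d - 2) := by
  set n := d - 2 with hn
  have hπ := Real.pi_pos
  have hθπ : θ ≤ π := by linarith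
  -- denominators
  have hInt : ∀ a b : ℝ, IntervalIntegrable (fun x => Real.sin x ^ n) volume a b :=
    fun a b => (Continuous.intervalIntegrable (by fun_prop) a b)
  have hD : 0 < ∫ φ in (0:ℝ)..π, Real.sin φ ^ n :=
    intervalIntegral_pos_of_pos_on (hInt 0 π)
      (fun x hx => pow_pos (Real.sin_pos_of_pos_of_lt_pi hx.1 hx.2) n) hπ
  have hB : 0 < ∫ φ in (0:ℝ)..θ, Real.sin φ ^ n :=
    intervalIntegral_pos_of_pos_on (hInt 0 θ)
      (fun x hx => pow_pos (Real.sin_pos_of_pos_of_lt_pi hx.1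
        (lt_of_lt_of_le hx.2 (by linarith))) n) hθ
  -- ratio simplification
  have hPsi : Psi d (c * θ) / Psi d θ =
      (∫ φ in (0:ℝ)..(c * θ), Real.sin φ ^ n) / (∫ φ in (0:ℝ)..θ, Real.sin φ ^ n) := by
    unfold Psi
    rw [div_div_div_cancel_right₀ hD.ne']
  -- substitution
  have hsub : (∫ φ in (0:ℝ)..(c * θ), Real.sin φ ^ n)
      = c * ∫ x in (0:ℝ)..θ, Real.sin (c * x) ^ n := by
    have := intervalIntegral.smul_integral_comp_mul_left (f := fun x => Real.sin x ^ n)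
      (a := (0:ℝ)) (b := θ) c
    rw [mul_zero] at this
    rw [← this, smul_eq_mul]
  -- pointwise bound and integral comparison
  have hsθ : 0 < Real.sin θ := Real.sin_pos_of_pos_of_lt_pi hθ (by linarith)
  have hcomp : (∫ x in (0:ℝ)..θ, Real.sin (c * x) ^ n)
      ≤ (Real.sin (c * θ) / Real.sin θ) ^ n * ∫ φ in (0:ℝ)..θ, Real.sin φ ^ n := by
    rw [← intervalIntegral.integral_const_mul]
    apply intervalIntegral.integral_mono_on (le_of_lt hθ)
      (Continuous.intervalIntegrable (by fun_prop) _ _)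
      (Continuous.intervalIntegrable (by fun_prop) _ _)
    intro x hx
    have hkey := aux_sin_ratio hc hc' hx.1 hx.2 hθ'
    have hcxx : c * x ≤ x := mul_le_of_le_one_left hx.1 hc'
    have hcx : 0 ≤ Real.sin (c * x) := by
      apply Real.sin_nonneg_of_nonneg_of_le_pi (mul_nonneg hc.le hx.1)
      linarith [hx.2]
    have : Real.sin (c * x) ≤ Real.sin (c * θ) / Real.sin θ * Real.sin x := by
      rw [div_mul_eq_mul_div, le_div_iff₀ hsθ]
      linarith [hkey]
    calc Real.sin (c * x) ^ n ≤ (Real.sin (c * θ) / Real.sin θ * Real.sin x) ^ n :=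
          pow_le_pow_left₀ hcx this n
      _ = (Real.sin (c * θ) / Real.sin θ) ^ n * Real.sin x ^ n := mul_pow _ _ _
  rw [hPsi, hsub, div_le_iff₀ hB]
  calc c * ∫ x in (0:ℝ)..θ, Real.sin (c * x) ^ n
      ≤ c * ((Real.sin (c * θ) / Real.sin θ) ^ n * ∫ φ in (0:ℝ)..θ, Real.sin φ ^ n) := by
        exact mul_le_mul_of_nonneg_left hcomp (le_of_lt hc)
    _ = c * (Real.sin (c * θ) / Real.sin θ) ^ n * ∫ φ in (0:ℝ)..θ, Real.sin φ ^ n := by ring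

end
end
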